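/- arXiv:2409.06755 — 5 statements merged into one kernel-verified Lean document; each statement's English description precedes it below -/
import Mathlib

section
/- For every d ≥ 2 and every unordered pair {e,f} of edges of G □ P_d, there is exactly one index i with 0 ≤ i ≤ d such that {e,f} belongs to the crossing band A^d_i; that is, the crossing bands A^d_0, …, A^d_d partition the set of unordered pairs of edges of G □ P_d. -/
open SimpleGraph

/-- The edge set of the `t`-th copy `G^t` of `G` inside `G □ P_n`:
edges `{(u,t),(v,t)}` with `u, v` adjacent in `G`.  Empty when `t > n`. -/
def copyEdges {V : Type*} (G : SimpleGraph V) (n t : ℕ) : Set (Sym2 (V × Fin (n + 1))) :=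
  {e | ∃ ht : t < n + 1, ∃ u v : V, G.Adj u v ∧ e = s((u, ⟨t, ht⟩), (v, ⟨t, ht⟩))}

/-- The set `H^t` of path edges linking copy `t` to copy `t+1` inside `G □ P_n`:
edges `{(v,t),(v,t+1)}` with `v ∈ V`.  Empty when `t ≥ n`. -/
def pathEdges (V : Type*) (n t : ℕ) : Set (Sym2 (V × Fin (n + 1))) :=
  {e | ∃ ht : t + 1 < n + 1, ∃ v : V,
    e = s((v, ⟨t, Nat.lt_of_succ_lt ht⟩), (v, ⟨t + 1, ht⟩))}

/-- The defining condition of the crossing band `A^d_i`, for an ordered pair of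
edges `(e, f)` of `G □ P_d`: for some `0 ≤ j ≤ 2i`, either
`e ∈ G^j ∪ H^j` and `f ∈ G^{2i-j-1} ∪ H^{2i-j-1} ∪ G^{2i-j}`, or
`e ∈ H^j` and `f ∈ H^{2i-j-2}`, where sets whose superscript would be negative
are empty (here this is encoded without natural subtraction, writing
`k = 2i - j - 1` resp. `k = 2i - j - 2`, and treating the case `j = 2i`,
where only `G^{2i-j} = G^0` survives, separately). -/
def bandCond {V : Type*} (G : SimpleGraph V) (d i : ℕ)
    (e f : Sym2 (V × Fin (d + 1))) : Prop :=
  ∃ j k : ℕ,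
    (j + k + 1 = 2 * i ∧
      e ∈ copyEdges G d j ∪ pathEdges V d j ∧
      f ∈ copyEdges G d k ∪ pathEdges V d k ∪ copyEdges G d (k + 1)) ∨
    (j = 2 * i ∧
      e ∈ copyEdges G d j ∪ pathEdges V d j ∧ f ∈ copyEdges G d 0) ∨
    (j + k + 2 = 2 * i ∧ e ∈ pathEdges V d j ∧ f ∈ pathEdges V d k)

section aux
variable {V : Type*} {G : SimpleGraph V} {d : ℕ}

lemma copy_inj {e : Sym2 (V × Fin (d+1))} {s t : ℕ}
    (hs : e ∈ copyEdges G d s) (ht : e ∈ copyEdges G d t) : s = t := by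
  obtain ⟨h1, u, v, -, rfl⟩ := hs
  obtain ⟨h2, u', v', -, he⟩ := ht
  rw [Sym2.eq_iff] at he
  rcases he with ⟨h, -⟩ | ⟨h, -⟩ <;>
    · simp only [Prod.mk.injEq, Fin.mk.injEq] at h; exact h.2

lemma path_inj {e : Sym2 (V × Fin (d+1))} {s t : ℕ}
    (hs : e ∈ pathEdges V d s) (ht : e ∈ pathEdges V d t) : s = t := by
  obtain ⟨h1, u, rfl⟩ := hs
  obtain ⟨h2, v, he⟩ := ht
  rw [Sym2.eq_iff] at he
  rcases he with ⟨h, h'⟩ | ⟨h, h'⟩ <;>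
    simp only [Prod.mk.injEq, Fin.mk.injEq] at h h' <;> omega

lemma copy_path {e : Sym2 (V × Fin (d+1))} {s t : ℕ}
    (hs : e ∈ copyEdges G d s) (ht : e ∈ pathEdges V d t) : False := by
  obtain ⟨h1, u, v, -, rfl⟩ := hs
  obtain ⟨h2, w, he⟩ := ht
  rw [Sym2.eq_iff] at he
  rcases he with ⟨h, h'⟩ | ⟨h, h'⟩ <;>
    simp only [Prod.mk.injEq, Fin.mk.injEq] at h h' <;> omega

/-- weight condition -/
def wtCond (G : SimpleGraph V) (d : ℕ) (e : Sym2 (V × Fin (d+1))) (w : ℕ) : Prop :=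
  (∃ s, w = 2*s ∧ e ∈ copyEdges G d s) ∨ (∃ s, w = 2*s + 1 ∧ e ∈ pathEdges V d s)

lemma wt_unique {e : Sym2 (V × Fin (d+1))} {w w' : ℕ}
    (h : wtCond G d e w) (h' : wtCond G d e w') : w = w' := by
  rcases h with ⟨s, rfl, hs⟩ | ⟨s, rfl, hs⟩ <;> rcases h' with ⟨t, rfl, ht⟩ | ⟨t, rfl, ht⟩
  · rw [copy_inj hs ht]
  · exact (copy_path hs ht).elim
  · exact (copy_path ht hs).elim
  · rw [path_inj hs ht]

lemma wt_exists {e : Sym2 (V × Fin (d+1))}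
    (he : e ∈ (G.boxProd (pathGraph (d + 1))).edgeSet) :
    ∃ w, wtCond G d e w ∧ w ≤ 2*d := by
  induction e using Sym2.ind with
  | _ a b =>
    rw [mem_edgeSet, boxProd_adj] at he
    obtain ⟨u, p⟩ := a
    obtain ⟨v, q⟩ := b
    rcases he with ⟨hG, hpq⟩ | ⟨hP, huv⟩
    · simp only at hpq
      subst hpq
      exact ⟨2 * p.val, Or.inl ⟨p.val, rfl, p.isLt, u, v, hG, by simp⟩,
        by have := p.isLt; omega⟩
    · simp only at huv hP
      subst huv
      rw [pathGraph_adj] at hP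
      have hq := q.isLt
      have hp := p.isLt
      rcases hP with h | h
      · refine ⟨2 * p.val + 1, Or.inr ⟨p.val, rfl, by omega, u, ?_⟩, by omega⟩
        simp [Sym2.eq_iff, Prod.ext_iff, Fin.ext_iff]
        omega
      · refine ⟨2 * q.val + 1, Or.inr ⟨q.val, rfl, by omega, u, ?_⟩, by omega⟩
        simp [Sym2.eq_iff, Prod.ext_iff, Fin.ext_iff]
        omega

lemma wt_of_copy {e : Sym2 (V × Fin (d+1))} {s w : ℕ}
    (h : e ∈ copyEdges G d s) (hw : wtCond G d e w) : w = 2*s :=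
  wt_unique hw (Or.inl ⟨s, rfl, h⟩)

lemma wt_of_path {e : Sym2 (V × Fin (d+1))} {s w : ℕ}
    (h : e ∈ pathEdges V d s) (hw : wtCond G d e w) : w = 2*s + 1 :=
  wt_unique hw (Or.inr ⟨s, rfl, h⟩)


lemma band_wt {e f : Sym2 (V × Fin (d+1))} {i we wf : ℕ}
    (hb : bandCond G d i e f) (hwe : wtCond G d e we) (hwf : wtCond G d f wf) :
    4*i ≤ we + wf + 2 ∧ we + wf + 2 ≤ 4*i + 3 := by
  obtain ⟨j, k, h | h | h⟩ := hb
  · obtain ⟨hjk, he, hf⟩ := h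
    have h1 : we = 2*j ∨ we = 2*j+1 := by
      rcases he with h | h
      exacts [Or.inl (wt_of_copy h hwe), Or.inr (wt_of_path h hwe)]
    have h2 : wf = 2*k ∨ wf = 2*k+1 ∨ wf = 2*(k+1) := by
      rcases hf with (h | h) | h
      exacts [Or.inl (wt_of_copy h hwf), Or.inr (Or.inl (wt_of_path h hwf)),
        Or.inr (Or.inr (wt_of_copy h hwf))]
    omega
  · obtain ⟨hjk, he, hf⟩ := h
    have h1 : we = 2*j ∨ we = 2*j+1 := by
      rcases he with h | h
      exacts [Or.inl (wt_of_copy h hwe), Or.inr (wt_of_path h hwe)]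
    have h2 : wf = 0 := wt_of_copy hf hwf
    omega
  · obtain ⟨hjk, he, hf⟩ := h
    have h1 := wt_of_path he hwe
    have h2 := wt_of_path hf hwf
    omega

lemma band_exists {e f : Sym2 (V × Fin (d+1))} {i we wf : ℕ}
    (hwe : wtCond G d e we) (hwf : wtCond G d f wf)
    (hi : 4*i ≤ we + wf + 2) (hi' : we + wf + 2 ≤ 4*i + 3) :
    bandCond G d i e f ∨ bandCond G d i f e := by
  rcases hwe with ⟨s, rfl, hs⟩ | ⟨s, rfl, hs⟩ <;> rcases hwf with ⟨t, rfl, ht⟩ | ⟨t, rfl, ht⟩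
  · -- copy s, copy t
    have h : s + t + 1 = 2*i ∨ s + t = 2*i := by omega
    rcases h with h | h
    · exact Or.inl ⟨s, t, Or.inl ⟨h, Or.inl hs, Or.inl (Or.inl ht)⟩⟩
    · rcases Nat.eq_zero_or_pos t with rfl | hpos
      · exact Or.inl ⟨s, 0, Or.inr (Or.inl ⟨by omega, Or.inl hs, ht⟩)⟩
      · refine Or.inl ⟨s, t - 1, Or.inl ⟨by omega, Or.inl hs, Or.inr ?_⟩⟩
        rwa [Nat.sub_add_cancel hpos]
  · -- copy s, path t
    have h : s + t + 1 = 2*i ∨ s + t = 2*i := by omega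
    rcases h with h | h
    · exact Or.inl ⟨s, t, Or.inl ⟨h, Or.inl hs, Or.inl (Or.inr ht)⟩⟩
    · rcases Nat.eq_zero_or_pos s with rfl | hpos
      · exact Or.inr ⟨t, 0, Or.inr (Or.inl ⟨by omega, Or.inr ht, hs⟩)⟩
      · refine Or.inr ⟨t, s - 1, Or.inl ⟨by omega, Or.inr ht, Or.inr ?_⟩⟩
        rwa [Nat.sub_add_cancel hpos]
  · -- path s, copy t
    have h : s + t + 1 = 2*i ∨ s + t = 2*i := by omega
    rcases h with h | h
    · exact Or.inl ⟨s, t, Or.inl ⟨h, Or.inr hs, Or.inl (Or.inl ht)⟩⟩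
    · rcases Nat.eq_zero_or_pos t with rfl | hpos
      · exact Or.inl ⟨s, 0, Or.inr (Or.inl ⟨by omega, Or.inr hs, ht⟩)⟩
      · refine Or.inl ⟨s, t - 1, Or.inl ⟨by omega, Or.inr hs, Or.inr ?_⟩⟩
        rwa [Nat.sub_add_cancel hpos]
  · -- path s, path t
    have h : s + t + 2 = 2*i ∨ s + t + 1 = 2*i := by omega
    rcases h with h | h
    · exact Or.inl ⟨s, t, Or.inr (Or.inr ⟨h, hs, ht⟩)⟩
    · exact Or.inl ⟨s, t, Or.inl ⟨h, Or.inr hs, Or.inl (Or.inr ht)⟩⟩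

end aux

/-- The crossing band `A^d_i`: the set of unordered pairs `{e, f}` of edges of
`G □ P_d` satisfying, up to swapping `e` and `f`, the band condition. -/
def crossingBand {V : Type*} (G : SimpleGraph V) (d i : ℕ) :
    Set (Sym2 (Sym2 (V × Fin (d + 1)))) :=
  {p | ∃ e f : Sym2 (V × Fin (d + 1)),
    p = s(e, f) ∧
    e ∈ (G.boxProd (pathGraph (d + 1))).edgeSet ∧
    f ∈ (G.boxProd (pathGraph (d + 1))).edgeSet ∧
    bandCond G d i e f}

/-- For every `d ≥ 2` and every unordered pair `{e, f}` of edges of `G □ P_d`,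
there is exactly one index `0 ≤ i ≤ d` with `{e, f} ∈ A^d_i`: the crossing
bands `A^d_0, …, A^d_d` partition the unordered pairs of edges of `G □ P_d`. -/
theorem crossingBands_partition {V : Type*} [Fintype V] (G : SimpleGraph V)
    (d : ℕ) (hd : 2 ≤ d)
    (e f : Sym2 (V × Fin (d + 1)))
    (he : e ∈ (G.boxProd (pathGraph (d + 1))).edgeSet)
    (hf : f ∈ (G.boxProd (pathGraph (d + 1))).edgeSet) :
    ∃! i : ℕ, i ≤ d ∧ s(e, f) ∈ crossingBand G d i := by
  obtain ⟨we, hwe, hwe2⟩ := wt_exists he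
  obtain ⟨wf, hwf, hwf2⟩ := wt_exists hf
  refine ⟨(we + wf + 2) / 4, ⟨by omega, ?_⟩, ?_⟩
  · have h4 : 4 * ((we + wf + 2) / 4) ≤ we + wf + 2 ∧
        we + wf + 2 ≤ 4 * ((we + wf + 2) / 4) + 3 := by omega
    rcases band_exists hwe hwf h4.1 h4.2 with hb | hb
    · exact ⟨e, f, rfl, he, hf, hb⟩
    · exact ⟨f, e, Sym2.eq_swap, hf, he, hb⟩
  · rintro i ⟨hi, e', f', hp, he', hf', hb⟩
    rw [Sym2.eq_iff] at hp
    have hr : 4 * i ≤ we + wf + 2 ∧ we + wf + 2 ≤ 4 * i + 3 := by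
      rcases hp with ⟨rfl, rfl⟩ | ⟨rfl, rfl⟩
      · exact band_wt hb hwe hwf
      · have := band_wt hb hwf hwe
        omega
    omega
end

section
/- Let 2 ≤ d ≤ n and 0 < m < d, and for 0 ≤ j ≤ n − d let σ_j be the shift embedding of G □ P_d into G □ P_n sending (v,t) to (v,t+j). Then: (a) the image under σ_0 of the union A^d_0 ∪ ⋯ ∪ A^d_{m−1} of the first m crossing bands of G □ P_d is contained in the union A^n_0 ∪ ⋯ ∪ A^n_{m−1} of the first m crossing bands of G □ P_n; and (b) the image under σ_{n−d} of the union A^d_{m+1} ∪ ⋯ ∪ A^d_d of the final d − m crossing bands of G □ P_d is contained in the union A^n_{n−d+m+1} ∪ ⋯ ∪ A^n_n of the final d − m crossing bands of G □ P_n. (The image of a pair {e,f} is the pair {σ_j(e), σ_j(f)}.) -/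
open SimpleGraph

/-- The shift map `σ_j` sending `(v, t)` to `(v, t + j)`, from the vertices of
`G □ P_d` to the vertices of `G □ P_n`, for `d + j ≤ n`. -/
def shiftVert (V : Type*) (d n j : ℕ) (h : d + j ≤ n) :
    V × Fin (d + 1) → V × Fin (n + 1) :=
  fun p => (p.1, ⟨p.2.val + j, by have := p.2.isLt; omega⟩)

lemma shift_copyEdges {V : Type*} {G : SimpleGraph V} {d n σ t : ℕ} (h : d + σ ≤ n)
    {e : Sym2 (V × Fin (d + 1))} (he : e ∈ copyEdges G d t) :
    Sym2.map (shiftVert V d n σ h) e ∈ copyEdges G n (t + σ) := by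
  obtain ⟨ht, u, v, huv, rfl⟩ := he
  exact ⟨by omega, u, v, huv, by simp [Sym2.map_pair_eq, shiftVert]⟩

lemma shift_pathEdges {V : Type*} {d n σ t : ℕ} (h : d + σ ≤ n)
    {e : Sym2 (V × Fin (d + 1))} (he : e ∈ pathEdges V d t) :
    Sym2.map (shiftVert V d n σ h) e ∈ pathEdges V n (t + σ) := by
  obtain ⟨ht, v, rfl⟩ := he
  have ht' : t + σ + 1 < n + 1 := by omega
  have hfin : (⟨t + 1 + σ, by omega⟩ : Fin (n + 1)) = ⟨t + σ + 1, ht'⟩ := by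
    simp only [Fin.mk.injEq]; omega
  refine ⟨ht', v, ?_⟩
  simp only [Sym2.map_pair_eq, shiftVert, hfin]

lemma copyEdges_subset_edgeSet {V : Type*} {G : SimpleGraph V} {n t : ℕ}
    {e : Sym2 (V × Fin (n + 1))} (he : e ∈ copyEdges G n t) :
    e ∈ (G.boxProd (pathGraph (n + 1))).edgeSet := by
  obtain ⟨ht, u, v, huv, rfl⟩ := he
  exact Or.inl ⟨huv, rfl⟩

lemma pathEdges_subset_edgeSet {V : Type*} {G : SimpleGraph V} {n t : ℕ}
    {e : Sym2 (V × Fin (n + 1))} (he : e ∈ pathEdges V n t) :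
    e ∈ (G.boxProd (pathGraph (n + 1))).edgeSet := by
  obtain ⟨ht, v, rfl⟩ := he
  exact Or.inr ⟨pathGraph_adj.mpr (Or.inl rfl), rfl⟩

lemma shift_copyPath {V : Type*} {G : SimpleGraph V} {d n σ t : ℕ} (h : d + σ ≤ n)
    {e : Sym2 (V × Fin (d + 1))} (he : e ∈ copyEdges G d t ∪ pathEdges V d t) :
    Sym2.map (shiftVert V d n σ h) e ∈ copyEdges G n (t + σ) ∪ pathEdges V n (t + σ) :=
  he.elim (fun h' => Or.inl (shift_copyEdges h h')) (fun h' => Or.inr (shift_pathEdges h h'))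

lemma copyPath_subset_edgeSet {V : Type*} {G : SimpleGraph V} {n t : ℕ}
    {e : Sym2 (V × Fin (n + 1))} (he : e ∈ copyEdges G n t ∪ pathEdges V n t) :
    e ∈ (G.boxProd (pathGraph (n + 1))).edgeSet :=
  he.elim copyEdges_subset_edgeSet pathEdges_subset_edgeSet

lemma shift_bandCond {V : Type*} {G : SimpleGraph V} {d n σ i : ℕ} (h : d + σ ≤ n)
    {e f : Sym2 (V × Fin (d + 1))} (hb : bandCond G d i e f) :
    bandCond G n (i + σ) (Sym2.map (shiftVert V d n σ h) e)
      (Sym2.map (shiftVert V d n σ h) f) := by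
  obtain ⟨j, k, hc | hc | hc⟩ := hb
  · obtain ⟨hjk, he, hf⟩ := hc
    refine ⟨j + σ, k + σ, Or.inl ⟨by omega, shift_copyPath h he, ?_⟩⟩
    rcases hf with (hf | hf) | hf
    · exact Or.inl (Or.inl (shift_copyEdges h hf))
    · exact Or.inl (Or.inr (shift_pathEdges h hf))
    · exact Or.inr (by have := shift_copyEdges h hf; convert this using 2; omega)
  · obtain ⟨hj, he, hf⟩ := hc
    rcases Nat.eq_zero_or_pos σ with hσ | hσ
    · subst hσ
      exact ⟨j, k, Or.inr (Or.inl ⟨by omega, shift_copyPath h he,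
        by have := shift_copyEdges h hf; simpa using this⟩)⟩
    · refine ⟨j + σ, σ - 1, Or.inl ⟨by omega, shift_copyPath h he, ?_⟩⟩
      exact Or.inr (by have := shift_copyEdges h hf; convert this using 2; omega)
  · obtain ⟨hjk, he, hf⟩ := hc
    exact ⟨j + σ, k + σ, Or.inr (Or.inr ⟨by omega, shift_pathEdges h he,
      shift_pathEdges h hf⟩)⟩

lemma shift_crossingBand {V : Type*} {G : SimpleGraph V} {d n σ i : ℕ} (h : d + σ ≤ n)
    {p : Sym2 (Sym2 (V × Fin (d + 1)))} (hp : p ∈ crossingBand G d i) :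
    Sym2.map (Sym2.map (shiftVert V d n σ h)) p ∈ crossingBand G n (i + σ) := by
  obtain ⟨e, f, rfl, he, hf, hb⟩ := hp
  have hb' := shift_bandCond h hb
  refine ⟨_, _, by simp [Sym2.map_pair_eq], ?_, ?_, hb'⟩
  · obtain ⟨j, k, hc | hc | hc⟩ := hb'
    · exact copyPath_subset_edgeSet hc.2.1
    · exact copyPath_subset_edgeSet hc.2.1
    · exact pathEdges_subset_edgeSet hc.2.1
  · obtain ⟨j, k, hc | hc | hc⟩ := hb'
    · rcases hc.2.2 with (h' | h') | h'
      · exact copyEdges_subset_edgeSet h'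
      · exact pathEdges_subset_edgeSet h'
      · exact copyEdges_subset_edgeSet h'
    · exact copyEdges_subset_edgeSet hc.2.2
    · exact pathEdges_subset_edgeSet hc.2.2

/-- Let `2 ≤ d ≤ n` and `0 < m < d`. Then:
(a) the image under `σ_0` of `A^d_0 ∪ ⋯ ∪ A^d_{m-1}` is contained in
    `A^n_0 ∪ ⋯ ∪ A^n_{m-1}`; and
(b) the image under `σ_{n-d}` of `A^d_{m+1} ∪ ⋯ ∪ A^d_d` is contained in
    `A^n_{n-d+m+1} ∪ ⋯ ∪ A^n_n`,
where the image of a pair `{e, f}` is `{σ_j(e), σ_j(f)}`. -/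
theorem shift_first_and_final_crossingBands {V : Type*} [Fintype V]
    (G : SimpleGraph V) (d n m : ℕ) (hd : 2 ≤ d) (hdn : d ≤ n)
    (hm : 0 < m) (hmd : m < d) :
    (∀ p : Sym2 (Sym2 (V × Fin (d + 1))),
      (∃ i, i < m ∧ p ∈ crossingBand G d i) →
      ∃ i, i < m ∧
        Sym2.map (Sym2.map (shiftVert V d n 0 (by omega))) p ∈ crossingBand G n i) ∧
    (∀ p : Sym2 (Sym2 (V × Fin (d + 1))),
      (∃ i, m < i ∧ i ≤ d ∧ p ∈ crossingBand G d i) →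
      ∃ i, n - d + m < i ∧ i ≤ n ∧
        Sym2.map (Sym2.map (shiftVert V d n (n - d) (by omega))) p ∈
          crossingBand G n i) := by
  constructor
  · rintro p ⟨i, him, hp⟩
    exact ⟨i, him, by simpa using shift_crossingBand (σ := 0) (by omega) hp⟩
  · rintro p ⟨i, him, hid, hp⟩
    exact ⟨i + (n - d), by omega, by omega,
      shift_crossingBand (σ := n - d) (by omega) hp⟩
end

section
/- Let 2 ≤ d ≤ n and 0 ≤ m ≤ d, and for 0 ≤ j ≤ n − d let σ_j be the shift embedding of G □ P_d into G □ P_n sending (v,t) to (v,t+j). Then for 0 ≤ j < j' ≤ n − d the images under σ_j and σ_{j'} of the crossing band A^d_m are disjoint: there are no pairs p ∈ A^d_m and p' ∈ A^d_m with {σ_j applied to p} equal to {σ_{j'} applied to p'} as unordered pairs of edges of G □ P_n. -/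
open SimpleGraph

/-- Sum of the second coordinates of the endpoints of an edge. -/
def edgeWeight {V : Type*} {N : ℕ} (e : Sym2 (V × Fin N)) : ℕ :=
  Sym2.lift ⟨fun a b => a.2.val + b.2.val, fun a b => Nat.add_comm _ _⟩ e

lemma edgeWeight_map_shift {V : Type*} {d n j : ℕ} (h : d + j ≤ n)
    (e : Sym2 (V × Fin (d + 1))) :
    edgeWeight (Sym2.map (shiftVert V d n j h) e) = edgeWeight e + 2 * j := by
  induction e using Sym2.inductionOn with
  | hf a b => simp [edgeWeight, shiftVert]; omega

lemma edgeWeight_copy {V : Type*} {G : SimpleGraph V} {d t : ℕ}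
    {e : Sym2 (V × Fin (d + 1))} (he : e ∈ copyEdges G d t) :
    edgeWeight e = 2 * t := by
  obtain ⟨ht, u, v, _, rfl⟩ := he
  simp [edgeWeight]; ring

lemma edgeWeight_path {V : Type*} {d t : ℕ}
    {e : Sym2 (V × Fin (d + 1))} (he : e ∈ pathEdges V d t) :
    edgeWeight e = 2 * t + 1 := by
  obtain ⟨ht, v, rfl⟩ := he
  simp [edgeWeight]; ring

lemma bandCond_weight {V : Type*} {G : SimpleGraph V} {d m : ℕ}
    {e f : Sym2 (V × Fin (d + 1))} (h : bandCond G d m e f) :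
    edgeWeight e + edgeWeight f ≤ 4 * m + 1 ∧
      4 * m ≤ edgeWeight e + edgeWeight f + 2 := by
  obtain ⟨a, b, h1 | h2 | h3⟩ := h
  · obtain ⟨hsum, he, hf⟩ := h1
    have hew : edgeWeight e = 2 * a ∨ edgeWeight e = 2 * a + 1 := by
      rcases he with he | he
      · exact Or.inl (edgeWeight_copy he)
      · exact Or.inr (edgeWeight_path he)
    have hfw : edgeWeight f = 2 * b ∨ edgeWeight f = 2 * b + 1 ∨
        edgeWeight f = 2 * (b + 1) := by
      rcases hf with (hf | hf) | hf
      · exact Or.inl (edgeWeight_copy hf)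
      · exact Or.inr (Or.inl (edgeWeight_path hf))
      · exact Or.inr (Or.inr (edgeWeight_copy hf))
    omega
  · obtain ⟨hsum, he, hf⟩ := h2
    have hew : edgeWeight e = 2 * a ∨ edgeWeight e = 2 * a + 1 := by
      rcases he with he | he
      · exact Or.inl (edgeWeight_copy he)
      · exact Or.inr (edgeWeight_path he)
    have hfw := edgeWeight_copy hf
    omega
  · obtain ⟨hsum, he, hf⟩ := h3
    have hew := edgeWeight_path he
    have hfw := edgeWeight_path hf
    omega

/-- Let `2 ≤ d ≤ n` and `0 ≤ m ≤ d`.  For `0 ≤ j < j' ≤ n - d`, the images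
under `σ_j` and `σ_{j'}` of the crossing band `A^d_m` are disjoint: no pair
`p ∈ A^d_m` maps under `σ_j` to the same unordered pair of edges of `G □ P_n`
as some pair `p' ∈ A^d_m` under `σ_{j'}`. -/
theorem shift_crossingBand_images_disjoint {V : Type*} [Fintype V]
    (G : SimpleGraph V) (d n m : ℕ) (hd : 2 ≤ d) (hdn : d ≤ n) (hm : m ≤ d)
    (j j' : ℕ) (hjj' : j < j') (hj' : d + j' ≤ n)
    (p p' : Sym2 (Sym2 (V × Fin (d + 1))))
    (hp : p ∈ crossingBand G d m) (hp' : p' ∈ crossingBand G d m) :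
    Sym2.map (Sym2.map (shiftVert V d n j (by omega))) p ≠
      Sym2.map (Sym2.map (shiftVert V d n j' hj')) p' := by
  obtain ⟨e, f, rfl, _, _, hb⟩ := hp
  obtain ⟨e', f', rfl, _, _, hb'⟩ := hp'
  intro heq
  simp only [Sym2.map_pair_eq, Sym2.eq_iff] at heq
  have w := bandCond_weight hb
  have w' := bandCond_weight hb'
  rcases heq with ⟨h1, h2⟩ | ⟨h1, h2⟩ <;>
  · have e1 := congrArg edgeWeight h1
    have e2 := congrArg edgeWeight h2
    rw [edgeWeight_map_shift, edgeWeight_map_shift] at e1 e2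
    omega
end

section
/- Let a ≥ 1 and N be natural numbers, and let x_0, x_1, …, x_N be natural numbers such that x_t ≥ a − 1 for all 0 ≤ t ≤ N, and such that for every 0 ≤ t < N, if x_t = a − 1 then x_{t+1} ≥ a + 1. Define z = 1 if x_N = a − 1 and z = 0 otherwise. Then for every 0 ≤ i ≤ N, the sum x_i + x_{i+1} + ⋯ + x_N satisfies x_i + ⋯ + x_N + z ≥ (N + 1 − i)·a. -/
/-- Let `a ≥ 1` and let `x_0, …, x_N` be natural numbers with `x_t ≥ a - 1` for
all `t ≤ N`, and such that whenever `t < N` and `x_t = a - 1`, we have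
`x_{t+1} ≥ a + 1`.  Let `z = 1` if `x_N = a - 1` and `z = 0` otherwise.  Then
for every `0 ≤ i ≤ N`, `x_i + ⋯ + x_N + z ≥ (N + 1 - i)·a`. -/
theorem sum_tail_band_counts_lower_bound (a N : ℕ) (ha : 1 ≤ a) (x : ℕ → ℕ)
    (h1 : ∀ t, t ≤ N → a - 1 ≤ x t)
    (h2 : ∀ t, t < N → x t = a - 1 → a + 1 ≤ x (t + 1)) :
    ∀ i, i ≤ N →
      (N + 1 - i) * a ≤
        (∑ t ∈ Finset.Icc i N, x t) + (if x N = a - 1 then 1 else 0) := by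
  -- strengthened claim
  have key : ∀ d i, i ≤ N → N - i = d →
      (N - i) * a + x i + (if x i = a - 1 then 1 else 0) ≤
        (∑ t ∈ Finset.Icc i N, x t) + (if x N = a - 1 then 1 else 0) := by
    intro d
    induction d with
    | zero =>
      intro i hi hd
      have : i = N := by omega
      subst this
      simp
    | succ d ih =>
      intro i hi hd
      have hiN : i < N := by omega
      have hsplit : (∑ t ∈ Finset.Icc i N, x t)
          = x i + ∑ t ∈ Finset.Icc (i + 1) N, x t := by
        rw [← Finset.sum_Ioc_add_eq_sum_Icc (le_of_lt hiN), ← Finset.Icc_add_one_left_eq_Ioc]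
        ring
      have hIH := ih (i + 1) (by omega) (by omega)
      have hx1 : a ≤ x (i + 1) + (if x (i + 1) = a - 1 then 1 else 0) := by
        split
        · omega
        · have := h1 (i + 1) (by omega)
          omega
      by_cases hxi : x i = a - 1
      · have hx2 := h2 i hiN hxi
        rw [if_pos hxi, hsplit]
        have : (N - (i+1)) * a + (a + 1) ≤
            (∑ t ∈ Finset.Icc (i + 1) N, x t) + (if x N = a - 1 then 1 else 0) := by
          have : (N - (i+1)) * a + x (i+1) ≤
              (∑ t ∈ Finset.Icc (i + 1) N, x t) + (if x N = a - 1 then 1 else 0) := by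
            omega
          omega
        have hNi : (N - i) * a = (N - (i+1)) * a + a := by
          have : N - i = (N - (i+1)) + 1 := by omega
          rw [this]; ring
        omega
      · rw [if_neg hxi, hsplit]
        have : (N - (i+1)) * a + a ≤
            (∑ t ∈ Finset.Icc (i + 1) N, x t) + (if x N = a - 1 then 1 else 0) := by
          omega
        have hNi : (N - i) * a = (N - (i+1)) * a + a := by
          have : N - i = (N - (i+1)) + 1 := by omega
          rw [this]; ring
        omega
  intro i hi
  have := key (N - i) i hi rfl
  have hx1 : a ≤ x i + (if x i = a - 1 then 1 else 0) := by
    split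
    · omega
    · have := h1 i hi
      omega
  have hNi : (N + 1 - i) * a = (N - i) * a + a := by
    have : N + 1 - i = (N - i) + 1 := by omega
    rw [this]; ring
  omega
end

section
/- Let a ≥ 1 and N be natural numbers, and let x_0, x_1, …, x_N be natural numbers such that x_t ≥ a − 1 for all 0 ≤ t ≤ N, and such that for every 0 ≤ t < N, if x_t = a − 1 then x_{t+1} ≥ a + 1. Define z = 1 if x_N = a − 1 and z = 0 otherwise. If there exists j with 1 ≤ j ≤ N + 1 such that x_0 + x_1 + ⋯ + x_{j−1} ≥ a·j + 1, then x_0 + x_1 + ⋯ + x_N + z ≥ (N + 1)·a + 1. -/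
/-- Let `a ≥ 1` and let `x_0, …, x_N` be natural numbers with `x_t ≥ a - 1` for
all `t ≤ N`, and such that whenever `t < N` and `x_t = a - 1`, we have
`x_{t+1} ≥ a + 1`.  Let `z = 1` if `x_N = a - 1` and `z = 0` otherwise.  If
there is `1 ≤ j ≤ N + 1` with `x_0 + ⋯ + x_{j-1} ≥ a·j + 1`, then
`x_0 + ⋯ + x_N + z ≥ (N + 1)·a + 1`. -/
theorem sum_band_counts_surplus (a N : ℕ) (ha : 1 ≤ a) (x : ℕ → ℕ)
    (h1 : ∀ t, t ≤ N → a - 1 ≤ x t)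
    (h2 : ∀ t, t < N → x t = a - 1 → a + 1 ≤ x (t + 1))
    (hj : ∃ j, 1 ≤ j ∧ j ≤ N + 1 ∧ a * j + 1 ≤ ∑ t ∈ Finset.range j, x t) :
    (N + 1) * a + 1 ≤
      (∑ t ∈ Finset.range (N + 1), x t) + (if x N = a - 1 then 1 else 0) := by
  obtain ⟨j, hj1, hjN, hjs⟩ := hj
  have key : ∀ k, j ≤ k → k ≤ N + 1 →
      a * k + 1 ≤ (∑ t ∈ Finset.range k, x t) +
        (if x (k - 1) = a - 1 then 1 else 0) := by
    intro k hk
    induction k, hk using Nat.le_induction with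
    | base =>
      intro _
      exact le_trans hjs (Nat.le_add_right _ _)
    | succ k hk ih =>
      intro hkN
      have hkN' : k ≤ N + 1 := by omega
      have IH := ih hkN'
      rw [Finset.sum_range_succ]
      have hmul : a * (k + 1) = a * k + a := by ring
      have hx1 : a - 1 ≤ x k := h1 k (by omega)
      have hk1 : k - 1 + 1 = k := by omega
      simp only [Nat.add_sub_cancel]
      by_cases hc : x (k - 1) = a - 1
      · have hxk : a + 1 ≤ x k := by
          have := h2 (k - 1) (by omega) hc
          rwa [hk1] at this
        rw [if_pos hc] at IH
        by_cases hc2 : x k = a - 1 <;> simp [hc2] <;> omega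
      · rw [if_neg hc] at IH
        have hxk : a ≤ x k ∨ x k = a - 1 := by omega
        by_cases hc2 : x k = a - 1 <;> simp [hc2] <;> omega
  have := key (N + 1) hjN le_rfl
  have hmul : a * (N + 1) = (N + 1) * a := by ring
  simp only [Nat.add_sub_cancel] at this
  omega
end
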